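/- Consider the RLC iteration on a connected undirected graph: w^k = L_r x^k + E_l u^k + ∇f(x^k), x^{k+1} = argmin_{x∈X} α⟨w^k, x⟩ + B_ψ(x, x^k), u^{k+1} = u^k + α E_lᵀ x^{k+1}, with noiseless gradients. If 0 < α ≤ min{1/(β+λ), 1/γ}, then the energy V(x,u) = B_ψ(x*,x) + ½‖u−u*‖₂² is nonincreasing: V(x^{k+1}, u^{k+1}) ≤ V(x^k, u^k) − α(ℓ(x^{k+1}, u*) − ℓ(x*, u*)). -/

import Mathlib

open scoped RealInnerProductSpace
open Finset

noncomputable section RLCsetup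

/-- Node variables: one `ℝⁿ` vector per node, with the Euclidean (ℓ₂) product
structure. -/
abbrev NodeVec (V n : ℕ) := PiLp 2 fun _ : Fin V => EuclideanSpace ℝ (Fin n)

/-- Edge variables: one `ℝⁿ` vector per edge. -/
abbrev EdgeVec (m n : ℕ) := PiLp 2 fun _ : Fin m => EuclideanSpace ℝ (Fin n)

/-- Entries of the signed incidence matrix of the oriented graph. -/
def inc {V m : ℕ} (head tail : Fin m → Fin V) (i : Fin V) (e : Fin m) : ℝ :=
  if i = head e then 1 else if i = tail e then -1 else 0

/-- `E_l u = (E diag(√l) ⊗ Iₙ) u`. -/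
def Elmap {V m n : ℕ} (head tail : Fin m → Fin V) (l : Fin m → ℝ)
    (u : EdgeVec m n) : NodeVec V n :=
  WithLp.toLp 2 fun i => ∑ e, (inc head tail i e * Real.sqrt (l e)) • u e

/-- `E_lᵀ x = (diag(√l) Eᵀ ⊗ Iₙ) x`. -/
def EltMap {V m n : ℕ} (head tail : Fin m → Fin V) (l : Fin m → ℝ)
    (x : NodeVec V n) : EdgeVec m n :=
  WithLp.toLp 2 fun e => Real.sqrt (l e) • ∑ i, inc head tail i e • x i

/-- `L_r x = (E diag(r) Eᵀ ⊗ Iₙ) x`. -/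
def LrMap {V m n : ℕ} (head tail : Fin m → Fin V) (r : Fin m → ℝ)
    (x : NodeVec V n) : NodeVec V n :=
  WithLp.toLp 2 fun i => ∑ e, (inc head tail i e * r e) • ∑ j, inc head tail j e • x j

/-- Bregman divergence on node variables. -/
def bregman {V n : ℕ} (ψ : NodeVec V n → ℝ) (ψ' : NodeVec V n → NodeVec V n)
    (x' x : NodeVec V n) : ℝ :=
  ψ x' - ψ x - ⟪ψ' x, x' - x⟫

end RLCsetup

/-!
The primal update is a mirror-descent step: first-order optimality of `x^{k+1}` and the
three-point identity for `B_ψ` bound `B_ψ(x*, x^{k+1})` by `B_ψ(x*, x^k) − B_ψ(x^{k+1}, x^k)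
− α⟨w^k, x^{k+1} − x*⟩`, and `B_ψ(x^{k+1}, x^k) ≥ ½‖x^{k+1} − x^k‖²` by strong convexity.
Convexity and `β`-smoothness of `f` bound the gradient part of `⟨w^k, x^{k+1} − x*⟩` below by
`f(x^{k+1}) − f(x*) − (β/2)‖x^{k+1} − x^k‖²`. Because `E_lᵀ x* = 0`, the `L_r` and `E_l` parts
only see `x^{k+1}`, and `2⟨L_r x^k, x^{k+1}⟩ ≥ ⟨L_r x^{k+1}, x^{k+1}⟩ − λ‖x^{k+1} − x^k‖²` by the
Rayleigh bound for `L_r`. Expanding `½‖u^{k+1} − u*‖²` cancels `⟨E_l u^k, x^{k+1}⟩` and adds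
`(α²/2)‖E_lᵀ x^{k+1}‖² ≤ (α/2)⟨L_r x^{k+1}, x^{k+1}⟩`, as `α l ≤ r`. What is left over,
`½(α(β + λ) − 1)‖x^{k+1} − x^k‖²`, is nonpositive by the step-size condition.
-/

theorem mul_le_one_of_le_one_div {α c : ℝ} (hα : 0 < α) (h : α ≤ 1 / c) : α * c ≤ 1 := by
  rcases le_or_gt c 0 with hc | hc
  · nlinarith
  · rwa [le_div_iff₀ hc] at h

section InnerProductSpace

variable {E : Type*} [NormedAddCommGroup E] [InnerProductSpace ℝ E]

theorem ConvexOn.fderiv_sub_le {S : Set E} {φ : E → ℝ} {φ' : E →L[ℝ] ℝ} {x y : E}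
    (hφ : ConvexOn ℝ S φ) (hx : x ∈ S) (hy : y ∈ S) (hφ' : HasFDerivAt φ φ' x) :
    φ' (y - x) ≤ φ y - φ x := by
  let L : ℝ →ᵃ[ℝ] E := AffineMap.lineMap x y
  have hline : HasDerivAt (φ ∘ L) (φ' (y - x)) 0 :=
    (by simpa [L] using hφ' : HasFDerivAt φ φ' (L 0)).comp_hasDerivAt 0
      AffineMap.hasDerivAt_lineMap
  simpa [slope, L] using (hφ.comp_affineMap L).le_slope_of_hasDerivAt
    (x := 0) (y := 1) (by simpa [L] using hx) (by simpa [L] using hy) zero_lt_one hline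

theorem HasGradientAt.neg [CompleteSpace E] {f : E → ℝ} {G x : E} (h : HasGradientAt f G x) :
    HasGradientAt (fun z => -f z) (-G) x :=
  hasGradientAt_iff_hasFDerivAt.mpr (by rw [map_neg]; exact h.hasFDerivAt.neg)

theorem StrongConvexOn.add_inner_add_sq_le [CompleteSpace E] {S : Set E} {φ : E → ℝ} {m : ℝ}
    {G x y : E} (hφ : StrongConvexOn S m φ) (hx : x ∈ S) (hy : y ∈ S)
    (hG : HasGradientAt φ G x) :
    φ x + ⟪G, y - x⟫ + m / 2 * ‖y - x‖ ^ 2 ≤ φ y := by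
  have h := (strongConvexOn_iff_convex.mp hφ).fderiv_sub_le hx hy
    (hG.hasFDerivAt.sub ((hasStrictFDerivAt_norm_sq x).hasFDerivAt.const_mul (m / 2)))
  have hexpand : ‖y‖ ^ 2 = ‖x‖ ^ 2 + 2 * ⟪x, y - x⟫ + ‖y - x‖ ^ 2 := by
    simpa using norm_add_sq_real x (y - x)
  simp only [sub_apply, smul_apply, InnerProductSpace.toDual_apply_apply, innerSL_apply_apply,
    smul_eq_mul, nsmul_eq_mul, Nat.cast_ofNat, hexpand] at h
  linarith

/-- `hsmooth` says that `β / 2 * ‖z‖ ^ 2 - f z` is convex, the upper half of `β`-smoothness. -/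
theorem ConvexOn.le_add_inner_add_sq [CompleteSpace E] {S : Set E} {f : E → ℝ} {β : ℝ}
    {G x y z : E} (hf : ConvexOn ℝ S f) (hsmooth : StrongConvexOn S (-β) fun z => -f z)
    (hx : x ∈ S) (hy : y ∈ S) (hz : z ∈ S) (hG : HasGradientAt f G x) :
    f y ≤ f z + ⟪G, y - z⟫ + β / 2 * ‖y - x‖ ^ 2 := by
  have hlower := (strongConvexOn_zero.mpr hf).add_inner_add_sq_le hx hz hG
  have hupper := hsmooth.add_inner_add_sq_le hx hy hG.neg
  have hsplit : ⟪G, y - z⟫ = ⟪G, y - x⟫ - ⟪G, z - x⟫ := by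
    rw [← inner_sub_right, sub_sub_sub_cancel_right]
  rw [inner_neg_left] at hupper
  linarith

theorem StrongConvexOn.sum_piLp {ι : Type*} [Fintype ι] {s : Set E} {m : ℝ} {φ : ι → E → ℝ}
    (hφ : ∀ i, StrongConvexOn s m (φ i)) :
    StrongConvexOn {x : PiLp 2 (fun _ : ι => E) | ∀ i, x i ∈ s} m
      (fun x => ∑ i, φ i (x i)) := by
  simp only [strongConvexOn_iff_convex] at hφ ⊢
  refine ⟨fun x hx y hy a b ha hb hab i => (hφ i).1 (hx i) (hy i) ha hb hab,
    fun x hx y hy a b ha hb hab => ?_⟩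
  have hnode i := (hφ i).2 (hx i) (hy i) ha hb hab
  simp only [PiLp.norm_sq_eq_of_L2, mul_sum, ← sum_sub_distrib, smul_eq_mul, PiLp.add_apply,
    PiLp.smul_apply] at hnode ⊢
  calc _ ≤ ∑ i, (a * (φ i (x i) - m / 2 * ‖x i‖ ^ 2) + b * (φ i (y i) - m / 2 * ‖y i‖ ^ 2)) :=
        sum_le_sum fun i _ => hnode i
    _ = _ := by simp only [sum_add_distrib]

variable [FiniteDimensional ℝ E] {T : E →ₗ[ℝ] E} {lam : ℝ}

theorem LinearMap.IsSymmetric.inner_apply_self_le_mul_norm_sq (hT : T.IsSymmetric)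
    (hlam : lam ∈ upperBounds {μ : ℝ | ∃ x, x ≠ 0 ∧ T x = μ • x}) (d : E) :
    ⟪T d, d⟫ ≤ lam * ‖d‖ ^ 2 := by
  rcases eq_or_ne d 0 with rfl | hd
  · simp
  have : Nontrivial E := ⟨⟨d, 0, hd⟩⟩
  let T' := LinearMap.toContinuousLinearMap T
  have hbdd : BddAbove (Set.range fun x : { x : E // x ≠ 0 } => T'.rayleighQuotient x) :=
    ⟨‖T'‖, by rintro _ ⟨x, rfl⟩; exact (le_abs_self _).trans (T'.rayleighQuotient_le_norm x)⟩
  obtain ⟨v, hv⟩ := hT.hasEigenvalue_iSup_of_finiteDimensional.exists_hasEigenvector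
  have hsup : ⨆ x : { x : E // x ≠ 0 }, T'.rayleighQuotient x ≤ lam :=
    hlam ⟨v, hv.2, hv.apply_eq_smul⟩
  have hray : ⟪T d, d⟫ / ‖d‖ ^ 2 ≤ lam := (le_ciSup hbdd ⟨d, hd⟩).trans hsup
  rwa [div_le_iff₀ (by positivity)] at hray

theorem LinearMap.IsSymmetric.inner_apply_self_sub_le_two_inner (hT : T.IsSymmetric)
    (hlam : lam ∈ upperBounds {μ : ℝ | ∃ x, x ≠ 0 ∧ T x = μ • x}) {a : E}
    (ha : 0 ≤ ⟪T a, a⟫) (b : E) :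
    ⟪T b, b⟫ - lam * ‖b - a‖ ^ 2 ≤ 2 * ⟪T a, b⟫ := by
  have hray := hT.inner_apply_self_le_mul_norm_sq hlam (b - a)
  rw [map_sub, inner_sub_left, inner_sub_right, inner_sub_right, hT b a,
    real_inner_comm (T a) b] at hray
  linarith

end InnerProductSpace

section Mirror

variable {V n : ℕ} {ψ : NodeVec V n → ℝ} {ψ' : NodeVec V n → NodeVec V n}

theorem bregman_three_point (x y z : NodeVec V n) :
    bregman ψ ψ' z x = bregman ψ ψ' z y + bregman ψ ψ' y x + ⟪ψ' y - ψ' x, z - y⟫ := by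
  simp only [bregman, inner_sub_left, inner_sub_right]
  ring

theorem StrongConvexOn.mul_norm_sq_le_bregman {S : Set (NodeVec V n)} {m : ℝ} {x y : NodeVec V n}
    (hψ : StrongConvexOn S m ψ) (hx : x ∈ S) (hy : y ∈ S) (hψ' : HasGradientAt ψ (ψ' x) x) :
    m / 2 * ‖y - x‖ ^ 2 ≤ bregman ψ ψ' y x := by
  have := hψ.add_inner_add_sq_le hx hy hψ'
  rw [bregman]
  linarith

theorem inner_le_bregman_of_isMinOn {S : Set (NodeVec V n)} (hS : Convex ℝ S) {α : ℝ}
    {w xk x y : NodeVec V n} (hx : x ∈ S) (hy : y ∈ S) (hψ' : HasGradientAt ψ (ψ' x) x)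
    (hmin : IsMinOn (fun z => α * ⟪w, z⟫ + bregman ψ ψ' z xk) S x) :
    α * ⟪w, x - y⟫ ≤ bregman ψ ψ' y xk - bregman ψ ψ' y x - bregman ψ ψ' x xk := by
  have hderiv : HasFDerivAt (fun z => α * ⟪w, z⟫ + bregman ψ ψ' z xk)
      (α • innerSL ℝ w + (InnerProductSpace.toDual ℝ _ (ψ' x) - innerSL ℝ (ψ' xk))) x := by
    simp only [bregman]
    exact ((innerSL ℝ w).hasFDerivAt.const_mul α).add
      (((hasGradientAt_iff_hasFDerivAt.mp hψ').sub_const _).sub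
        ((innerSL ℝ (ψ' xk)).hasFDerivAt.comp x (hasFDerivAt_sub_const xk)))
  have hfirst := hmin.localize.hasFDerivWithinAt_nonneg
    hderiv.hasFDerivWithinAt (sub_mem_posTangentConeAt_of_segment_subset (hS.segment_subset hx hy))
  simp only [add_apply, smul_apply, coe_innerSL_apply, smul_eq_mul, sub_apply,
    InnerProductSpace.toDual_apply_apply] at hfirst
  rw [bregman_three_point xk x y, ← neg_sub y x, inner_neg_right, inner_sub_left]
  linarith

end Mirror

section Incidence

variable {V m n : ℕ} (head tail : Fin m → Fin V)

/-- The unweighted edge differences `(Eᵀ ⊗ Iₙ) x`. -/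
def edgeDiff (x : NodeVec V n) (e : Fin m) : EuclideanSpace ℝ (Fin n) :=
  ∑ i, inc head tail i e • x i

theorem inner_Elmap (l : Fin m → ℝ) (u : EdgeVec m n) (x : NodeVec V n) :
    ⟪Elmap head tail l u, x⟫ = ⟪u, EltMap head tail l x⟫ := by
  rw [PiLp.inner_apply (Elmap head tail l u) x, PiLp.inner_apply u]
  simp only [Elmap, EltMap, sum_inner, inner_sum, real_inner_smul_left, real_inner_smul_right,
    mul_sum]
  rw [sum_comm]
  exact sum_congr rfl fun e _ => sum_congr rfl fun i _ => by ring

theorem inner_LrMap (r : Fin m → ℝ) (x y : NodeVec V n) :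
    ⟪LrMap head tail r x, y⟫ = ∑ e, r e * ⟪edgeDiff head tail x e, edgeDiff head tail y e⟫ := by
  rw [PiLp.inner_apply (LrMap head tail r x) y]
  simp only [LrMap, edgeDiff, sum_inner, inner_sum, real_inner_smul_left, real_inner_smul_right,
    mul_sum]
  rw [sum_comm]
  exact sum_congr rfl fun e _ => sum_congr rfl fun i _ => sum_congr rfl fun j _ => by ring

theorem inner_LrMap_self_nonneg {r : Fin m → ℝ} (hr : ∀ e, 0 ≤ r e) (x : NodeVec V n) :
    0 ≤ ⟪LrMap head tail r x, x⟫ := by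
  rw [inner_LrMap]
  exact sum_nonneg fun e _ => mul_nonneg (hr e) real_inner_self_nonneg

theorem inner_LrMap_eq_zero_of_EltMap_eq_zero {l : Fin m → ℝ} (hl : ∀ e, 0 < l e)
    {x : NodeVec V n} (hx : EltMap head tail l x = 0) (r : Fin m → ℝ) (z : NodeVec V n) :
    ⟪LrMap head tail r z, x⟫ = 0 := by
  have hdiff e : edgeDiff head tail x e = 0 :=
    (smul_eq_zero.mp (congrArg (· e) hx)).resolve_left (Real.sqrt_pos.mpr (hl e)).ne'
  simp [inner_LrMap, hdiff]

theorem mul_norm_EltMap_sq_le {l r : Fin m → ℝ} {c : ℝ} (hl : ∀ e, 0 ≤ l e)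
    (hlr : ∀ e, c * l e ≤ r e) (x : NodeVec V n) :
    c * ‖EltMap head tail l x‖ ^ 2 ≤ ⟪LrMap head tail r x, x⟫ := by
  rw [← real_inner_self_eq_norm_sq, PiLp.inner_apply, inner_LrMap, mul_sum]
  refine sum_le_sum fun e _ => ?_
  change c * ⟪√(l e) • edgeDiff head tail x e, √(l e) • edgeDiff head tail x e⟫ ≤ _
  rw [real_inner_smul_left, real_inner_smul_right, ← mul_assoc √(l e), Real.mul_self_sqrt (hl e),
    ← mul_assoc]
  exact mul_le_mul_of_nonneg_right (hlr e) real_inner_self_nonneg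

theorem norm_add_smul_EltMap_sub_sq (l : Fin m → ℝ) (u v : EdgeVec m n) (α : ℝ)
    (x : NodeVec V n) :
    ‖u + α • EltMap head tail l x - v‖ ^ 2 = ‖u - v‖ ^ 2
      + 2 * α * (⟪Elmap head tail l u, x⟫ - ⟪Elmap head tail l v, x⟫)
      + α ^ 2 * ‖EltMap head tail l x‖ ^ 2 := by
  rw [add_sub_right_comm, norm_add_sq_real, real_inner_smul_right, norm_smul, inner_sub_left,
    ← inner_Elmap, ← inner_Elmap, mul_pow, Real.norm_eq_abs, sq_abs]
  ring

def lrLinearMap (r : Fin m → ℝ) : NodeVec V n →ₗ[ℝ] NodeVec V n where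
  toFun := LrMap head tail r
  map_add' x y := by
    ext i : 1
    simp [LrMap, smul_add, sum_add_distrib]
  map_smul' a x := by
    ext i : 1
    simp [LrMap, smul_sum, smul_comm a]

@[simp]
theorem lrLinearMap_apply (r : Fin m → ℝ) (x : NodeVec V n) :
    lrLinearMap head tail r x = LrMap head tail r x :=
  rfl

theorem lrLinearMap_isSymmetric (r : Fin m → ℝ) :
    (lrLinearMap head tail (n := n) r).IsSymmetric := by
  intro x y
  rw [lrLinearMap_apply, lrLinearMap_apply, inner_LrMap, real_inner_comm, inner_LrMap]
  exact sum_congr rfl fun e _ => by rw [real_inner_comm]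

end Incidence

theorem rlc_energy_decrease_general (V m n : ℕ)
    (head tail : Fin m → Fin V)
    (l r : Fin m → ℝ) (hl : ∀ e, 0 < l e) (hr : ∀ e, 0 < r e)
    (γ : ℝ)
    (hγ : IsGreatest {a : ℝ | ∀ e, a * l e ≤ r e} (1 / γ))
    (lam : ℝ)
    (hlam : IsGreatest
      {μ : ℝ | ∃ x : NodeVec V n, x ≠ 0 ∧ LrMap head tail r x = μ • x} lam)
    -- the constraint set
    (X₀ : Set (EuclideanSpace ℝ (Fin n)))
    -- the mirror map, a sum of 1-strongly convex node potentials
    (ψ₀ : EuclideanSpace ℝ (Fin n) → ℝ)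
    (hψ₀ : ConvexOn ℝ X₀ (fun v => ψ₀ v - ‖v‖ ^ 2 / 2))
    (ψ' : NodeVec V n → NodeVec V n)
    (hψ' : ∀ z ∈ {x : NodeVec V n | ∀ i, x i ∈ X₀},
      HasGradientAt (fun x : NodeVec V n => ∑ i, ψ₀ (x i)) (ψ' z) z)
    -- the objective, a sum of convex β-smooth node costs
    (β : ℝ)
    (F : Fin V → EuclideanSpace ℝ (Fin n) → ℝ)
    (hFconv : ∀ i, ConvexOn ℝ X₀ (F i))
    (hFsmooth : ∀ i, ConvexOn ℝ X₀ (fun v => β / 2 * ‖v‖ ^ 2 - F i v))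
    (g : NodeVec V n → NodeVec V n)
    (hg : ∀ z ∈ {x : NodeVec V n | ∀ i, x i ∈ X₀},
      HasGradientAt (fun x : NodeVec V n => ∑ i, F i (x i)) (g z) z)
    -- the saddle point (x*, u*)
    (xstar : NodeVec V n) (ustar : EdgeVec m n)
    (hxstarX : ∀ i, xstar i ∈ X₀)
    (hprimal : EltMap head tail l xstar = 0)
    -- the step size
    (α : ℝ) (hα : 0 < α) (hαle : α ≤ min (1 / (β + lam)) (1 / γ))
    -- one step of the RLC iteration with noiseless gradients
    (xk xk1 : NodeVec V n) (uk uk1 : EdgeVec m n)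
    (hxkX : ∀ i, xk i ∈ X₀) (hxk1X : ∀ i, xk1 i ∈ X₀)
    (hxmin : ∀ z : NodeVec V n, (∀ i, z i ∈ X₀) →
      α * ⟪LrMap head tail r xk + Elmap head tail l uk + g xk, xk1⟫
          + bregman (fun x => ∑ i, ψ₀ (x i)) ψ' xk1 xk
        ≤ α * ⟪LrMap head tail r xk + Elmap head tail l uk + g xk, z⟫
          + bregman (fun x => ∑ i, ψ₀ (x i)) ψ' z xk)
    (hu : uk1 = uk + α • EltMap head tail l xk1) :
    bregman (fun x => ∑ i, ψ₀ (x i)) ψ' xstar xk1 + ‖uk1 - ustar‖ ^ 2 / 2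
      ≤ bregman (fun x => ∑ i, ψ₀ (x i)) ψ' xstar xk + ‖uk - ustar‖ ^ 2 / 2
        - α * (((∑ i, F i (xk1 i)) + ⟪Elmap head tail l ustar, xk1⟫)
          - ((∑ i, F i (xstar i)) + ⟪Elmap head tail l ustar, xstar⟫)) := by
  have hΨ : StrongConvexOn {x : NodeVec V n | ∀ i, x i ∈ X₀} 1 fun x => ∑ i, ψ₀ (x i) :=
    .sum_piLp fun _ => strongConvexOn_iff_convex.mpr (hψ₀.congr fun v _ => by ring)
  have hsmooth : StrongConvexOn {x : NodeVec V n | ∀ i, x i ∈ X₀} (-β)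
      fun x => -∑ i, F i (x i) := by
    simpa only [sum_neg_distrib] using StrongConvexOn.sum_piLp (φ := fun i v => -F i v)
      fun i => strongConvexOn_iff_convex.mpr ((hFsmooth i).congr fun v _ => by ring)
  have hf : ConvexOn ℝ {x : NodeVec V n | ∀ i, x i ∈ X₀} fun x => ∑ i, F i (x i) :=
    strongConvexOn_zero.mp (.sum_piLp fun i => strongConvexOn_zero.mpr (hFconv i))
  have hmirror := inner_le_bregman_of_isMinOn hΨ.1 hxk1X hxstarX (hψ' xk1 hxk1X)
    (isMinOn_iff.mpr hxmin)
  have hbreg := hΨ.mul_norm_sq_le_bregman hxkX hxk1X (hψ' xk hxkX)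
  have hcost := hf.le_add_inner_add_sq hsmooth hxkX hxk1X hxstarX (hg xk hxkX)
  have hlap : ⟪LrMap head tail r xk1, xk1⟫ - lam * ‖xk1 - xk‖ ^ 2
      ≤ 2 * ⟪LrMap head tail r xk, xk1⟫ :=
    (lrLinearMap_isSymmetric head tail r).inner_apply_self_sub_le_two_inner hlam.2
      (inner_LrMap_self_nonneg head tail (fun e => (hr e).le) xk) xk1
  have hLstar := inner_LrMap_eq_zero_of_EltMap_eq_zero head tail hl hprimal r xk
  have hEstar (u : EdgeVec m n) : ⟪Elmap head tail l u, xstar⟫ = 0 := by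
    rw [inner_Elmap, hprimal, inner_zero_right]
  have hdual := norm_add_smul_EltMap_sub_sq head tail l uk ustar α xk1
  have hαlr e : α * l e ≤ r e :=
    (mul_le_mul_of_nonneg_right (hαle.trans (min_le_right _ _)) (hl e).le).trans (hγ.1 e)
  have hcons := mul_norm_EltMap_sq_le head tail (fun e => (hl e).le) hαlr xk1
  have hαβ := mul_le_one_of_le_one_div hα (hαle.trans (min_le_left _ _))
  rw [inner_add_left, inner_add_left, inner_sub_right (LrMap head tail r xk),
    inner_sub_right (Elmap head tail l uk), hLstar, hEstar, sub_zero, sub_zero] at hmirror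
  rw [hu, hEstar]
  linarith [mul_le_mul_of_nonneg_left hlap hα.le, mul_le_mul_of_nonneg_left hcost hα.le,
    mul_le_mul_of_nonneg_left hcons hα.le, mul_le_mul_of_nonneg_right hαβ (sq_nonneg ‖xk1 - xk‖)]

/-- One step of the (noiseless) RLC iteration does not increase the circuit
energy `V(x,u) = B_ψ(x*,x) + ½‖u−u*‖²`, decreasing it by at least
`α (ℓ(x^{k+1},u*) − ℓ(x*,u*))` (Lemma 2 of the paper). -/
theorem rlc_energy_decrease (V m n : ℕ)
    (G : SimpleGraph (Fin V)) (hG : G.Connected)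
    (head tail : Fin m → Fin V)
    (hadj : ∀ e, G.Adj (head e) (tail e))
    (hcover : ∀ i j, G.Adj i j →
      ∃ e, (head e = i ∧ tail e = j) ∨ (head e = j ∧ tail e = i))
    (l r : Fin m → ℝ) (hl : ∀ e, 0 < l e) (hr : ∀ e, 0 < r e)
    (γ : ℝ) (hγpos : 0 < γ)
    (hγ : IsGreatest {a : ℝ | ∀ e, a * l e ≤ r e} (1 / γ))
    (lam : ℝ)
    (hlam : IsGreatest
      {μ : ℝ | ∃ x : NodeVec V n, x ≠ 0 ∧ LrMap head tail r x = μ • x} lam)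
    -- the constraint set
    (X₀ : Set (EuclideanSpace ℝ (Fin n))) (hX₀c : Convex ℝ X₀)
    (hX₀cl : IsClosed X₀)
    -- the mirror map, a sum of 1-strongly convex node potentials
    (ψ₀ : EuclideanSpace ℝ (Fin n) → ℝ)
    (hψ₀ : ConvexOn ℝ X₀ (fun v => ψ₀ v - ‖v‖ ^ 2 / 2))
    (ψ' : NodeVec V n → NodeVec V n)
    (hψ' : ∀ z ∈ {x : NodeVec V n | ∀ i, x i ∈ X₀},
      HasGradientAt (fun x : NodeVec V n => ∑ i, ψ₀ (x i)) (ψ' z) z)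
    -- the objective, a sum of convex β-smooth node costs
    (β : ℝ) (hβ : 0 < β)
    (F : Fin V → EuclideanSpace ℝ (Fin n) → ℝ)
    (hFconv : ∀ i, ConvexOn ℝ X₀ (F i))
    (hFsmooth : ∀ i, ConvexOn ℝ X₀ (fun v => β / 2 * ‖v‖ ^ 2 - F i v))
    (g : NodeVec V n → NodeVec V n)
    (hg : ∀ z ∈ {x : NodeVec V n | ∀ i, x i ∈ X₀},
      HasGradientAt (fun x : NodeVec V n => ∑ i, F i (x i)) (g z) z)
    -- the saddle point (x*, u*)
    (xstar : NodeVec V n) (ustar : EdgeVec m n)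
    (hxstarX : ∀ i, xstar i ∈ X₀)
    (hprimal : EltMap head tail l xstar = 0)
    (hdual : ∀ z : NodeVec V n, (∀ i, z i ∈ X₀) →
      ⟪-(Elmap head tail l ustar) - g xstar, z - xstar⟫ ≤ 0)
    -- the step size
    (α : ℝ) (hα : 0 < α) (hαle : α ≤ min (1 / (β + lam)) (1 / γ))
    -- one step of the RLC iteration with noiseless gradients
    (xk xk1 : NodeVec V n) (uk uk1 : EdgeVec m n)
    (hxkX : ∀ i, xk i ∈ X₀) (hxk1X : ∀ i, xk1 i ∈ X₀)
    (hxmin : ∀ z : NodeVec V n, (∀ i, z i ∈ X₀) →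
      α * ⟪LrMap head tail r xk + Elmap head tail l uk + g xk, xk1⟫
          + bregman (fun x => ∑ i, ψ₀ (x i)) ψ' xk1 xk
        ≤ α * ⟪LrMap head tail r xk + Elmap head tail l uk + g xk, z⟫
          + bregman (fun x => ∑ i, ψ₀ (x i)) ψ' z xk)
    (hu : uk1 = uk + α • EltMap head tail l xk1) :
    bregman (fun x => ∑ i, ψ₀ (x i)) ψ' xstar xk1 + ‖uk1 - ustar‖ ^ 2 / 2
      ≤ bregman (fun x => ∑ i, ψ₀ (x i)) ψ' xstar xk + ‖uk - ustar‖ ^ 2 / 2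
        - α * (((∑ i, F i (xk1 i)) + ⟪Elmap head tail l ustar, xk1⟫)
          - ((∑ i, F i (xstar i)) + ⟪Elmap head tail l ustar, xstar⟫)) :=
  rlc_energy_decrease_general V m n head tail l r hl hr γ hγ lam hlam X₀ ψ₀ hψ₀ ψ' hψ' β F hFconv
    hFsmooth g hg xstar ustar hxstarX hprimal α hα hαle xk xk1 uk uk1 hxkX hxk1X hxmin hu
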